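/- Let m ≥ 1, let w be a weight function on m vertices with cut function δ_w, and let V ⊆ Fin m be a subset with |V| ≥ 3. Then ∑_{I ⊆ V} (−1)^{|I|} · δ_w(I) = 0. -/

import Mathlib

/-- A weight function on `m` vertices: symmetric, nonnegative, vanishing on the diagonal. -/
def IsWeight {m : ℕ} (w : Fin m → Fin m → ℝ) : Prop :=
  (∀ i j, w i j = w j i) ∧ (∀ i j, 0 ≤ w i j) ∧ ∀ i, w i i = 0

/-- The cut function of a weight function: `δ_w(I) = ∑_{i ∈ I} ∑_{j ∉ I} w i j`. -/
def cut {m : ℕ} (w : Fin m → Fin m → ℝ) (I : Finset (Fin m)) : ℝ :=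
  ∑ i ∈ I, ∑ j ∈ Iᶜ, w i j

/-- The Bell vector `β_{ij}`: value `1` on subsets containing exactly one of `i, j`, else `0`. -/
def bell {m : ℕ} (i j : Fin m) (I : Finset (Fin m)) : ℝ :=
  if Xor (i ∈ I) (j ∈ I) then 1 else 0

/-!
The cut function is a combination, with coefficients `w i j`, of the indicators of
`i ∈ I ∧ j ∉ I`, each of which sees only two vertices. The alternating sum over the subsets
of `V` kills every function of `I` that ignores some vertex of `V`, and `|V| ≥ 3` leaves such
a vertex for every pair `i, j`.
-/

open Finset

theorem Finset.sum_powerset_neg_one_pow_card_mul_eq_zero {α R : Type*} [DecidableEq α]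
    [CommRing R] {V : Finset α} {k : α} (hk : k ∈ V) {f : Finset α → R}
    (hf : ∀ I, k ∉ I → f (insert k I) = f I) :
    ∑ I ∈ V.powerset, (-1 : R) ^ I.card * f I = 0 := by
  rw [← insert_erase hk, sum_powerset_insert (notMem_erase k V), ← sum_add_distrib]
  refine sum_eq_zero fun I hI => ?_
  have hkI : k ∉ I := fun h => notMem_erase k V (mem_powerset.1 hI h)
  rw [card_insert_of_notMem hkI, hf I hkI, pow_succ]
  ring

theorem Finset.exists_mem_ne_ne {α : Type*} [DecidableEq α] {V : Finset α} (hV : 3 ≤ V.card)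
    (i j : α) : ∃ k ∈ V, k ≠ i ∧ k ≠ j := by
  obtain ⟨k, hk⟩ : (V \ {i, j}).Nonempty := by
    have hsdiff := le_card_sdiff {i, j} V
    have hpair := card_le_two (a := i) (b := j)
    rw [← card_pos]
    omega
  simp only [mem_sdiff, mem_insert, mem_singleton, not_or] at hk
  exact ⟨k, hk.1, hk.2⟩

theorem cut_eq_sum_ite {m : ℕ} (w : Fin m → Fin m → ℝ) (I : Finset (Fin m)) :
    cut w I = ∑ i, ∑ j, if i ∈ I ∧ j ∉ I then w i j else 0 := by
  simp only [cut, ite_and, ← mem_compl (s := I), sum_ite_irrel, sum_const_zero, sum_ite_mem,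
    univ_inter]

theorem multivariate_information_cut_general (m : ℕ) (w : Fin m → Fin m → ℝ)
    (V : Finset (Fin m)) (hV : 3 ≤ V.card) :
    ∑ I ∈ V.powerset, (-1 : ℝ) ^ I.card * cut w I = 0 := by
  simp only [cut_eq_sum_ite, mul_sum]
  rw [sum_comm]
  refine sum_eq_zero fun i _ => ?_
  rw [sum_comm]
  refine sum_eq_zero fun j _ => ?_
  obtain ⟨k, hkV, hki, hkj⟩ := exists_mem_ne_ne hV i j
  exact sum_powerset_neg_one_pow_card_mul_eq_zero hkV fun I _ => by
    simp only [mem_insert, hki.symm, hkj.symm, false_or]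

/-- The multivariate information equality for cut functions:
for any weight function `w` and any `V` with `|V| ≥ 3`,
`∑_{I ⊆ V} (−1)^{|I|} δ_w(I) = 0`. -/
theorem multivariate_information_cut (m : ℕ) (hm : 1 ≤ m) (w : Fin m → Fin m → ℝ)
    (hw : IsWeight w) (V : Finset (Fin m)) (hV : 3 ≤ V.card) :
    ∑ I ∈ V.powerset, (-1 : ℝ) ^ I.card * cut w I = 0 :=
  multivariate_information_cut_general m w V hV
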